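/- arXiv:2501.17249 — 3 statements merged into one kernel-verified Lean document; each statement's English description precedes it below -/
import Mathlib

section
/- Let L_1, ..., L_k be root subspaces of H_n such that every pairwise intersection L_s ∩ L_t is a root subspace. Then the full intersection L_1 ∩ ... ∩ L_k is a root subspace. -/
/-- The root `e_i - e_j` in `ℝ^n`. -/
def rootVec (n : ℕ) (i j : Fin n) : Fin n → ℝ :=
  Pi.single i 1 - Pi.single j 1

/-- A root subspace: a linear subspace spanned by a set of roots `e_i - e_j`. -/
def IsRootSubspace {n : ℕ} (L : Submodule ℝ (Fin n → ℝ)) : Prop :=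
  ∃ A : Set (Fin n → ℝ),
    (∀ v ∈ A, ∃ i j : Fin n, i ≠ j ∧ v = rootVec n i j) ∧ L = Submodule.span ℝ A

/-!
For an equivalence relation `r` on `Fin n` let `K(r)` be the space of vectors whose sums over
every class of `r` vanish. `K(r)` is spanned by the roots `e_i - e_j` with `i r j`, and a root
subspace `V` equals `K(r)` for the relation "`i = j` or `e_i - e_j ∈ V`". So it suffices to show
`⋂ₛ K(rₛ) ⊆ K(⋀ₛ rₛ)`. Induct on the number of relations: if `x` lies in every `K(rₛ)`, then
the restriction of `x` to a class `B` of `r₀` lies in every other `K(rₛ)`, since its block sums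
there are block sums of `x` over classes of `r₀ ⊓ rₛ`, which vanish because
`K(r₀) ∩ K(rₛ) = K(r₀ ⊓ rₛ)` by the pairwise hypothesis. The induction hypothesis then kills the
block sums of `x` over the classes of the full meet inside `B`.
-/

open Finset Submodule

namespace Setoid

theorem setOf_inter_setOf_eq_setOf_inf {α : Type*} {q r : Setoid α} {i j l₀ : α}
    (hr : r l₀ i) (hq : q l₀ j) :
    {l | r l i} ∩ {l | q l j} = {l | (q ⊓ r) l l₀} := by
  ext l
  simp only [Set.mem_inter_iff, Set.mem_ofPred_eq]
  exact ⟨fun h => ⟨q.trans h.2 (q.symm hq), r.trans h.1 (r.symm hr)⟩,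
    fun h => ⟨r.trans h.2 hr, q.trans h.1 hq⟩⟩

end Setoid

section BlockSumKernel

variable {α : Type*} [Fintype α]

def blockSumKernel (r : Setoid α) : Submodule ℝ (α → ℝ) where
  carrier := {x | ∀ j, ∑ i, {i | r i j}.indicator x i = 0}
  add_mem' hx hy j := by simp [Set.indicator_add', sum_add_distrib, hx j, hy j]
  zero_mem' j := by simp
  smul_mem' c x hx j := by
    change ∑ i, {i | r i j}.indicator (c • x ·) i = 0
    simp only [Set.indicator_const_smul_apply, ← smul_sum, hx j, smul_zero]

theorem indicator_mem_blockSumKernel {q r : Setoid α} {x : α → ℝ}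
    (hx : x ∈ blockSumKernel (q ⊓ r)) (j : α) :
    {l | q l j}.indicator x ∈ blockSumKernel r := by
  intro i
  rw [Set.indicator_indicator]
  by_cases h : ∃ l₀, r l₀ i ∧ q l₀ j
  · obtain ⟨l₀, hr, hq⟩ := h
    rw [Setoid.setOf_inter_setOf_eq_setOf_inf hr hq]
    exact hx l₀
  · push Not at h
    exact sum_eq_zero fun l _ => Set.indicator_of_notMem (fun hl => h l hl.1 hl.2) _

theorem mem_blockSumKernel_inf {q r : Setoid α} {x : α → ℝ}
    (hx : ∀ j, {l | q l j}.indicator x ∈ blockSumKernel r) :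
    x ∈ blockSumKernel (q ⊓ r) := by
  intro i
  rw [← Setoid.setOf_inter_setOf_eq_setOf_inf (r.refl i) (q.refl i), ← Set.indicator_indicator]
  exact hx i i

theorem finsetInf_blockSumKernel_le {ι : Type*} {r : ι → Setoid α} {s : Finset ι}
    (hs : s.Nonempty)
    (hpair : ∀ a ∈ s, ∀ b ∈ s,
      blockSumKernel (r a) ⊓ blockSumKernel (r b) ≤ blockSumKernel (r a ⊓ r b)) :
    s.inf (blockSumKernel ∘ r) ≤ blockSumKernel (s.inf r) := by
  induction hs using Finset.Nonempty.cons_induction with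
  | singleton a => simp
  | cons a s ha hs ih =>
    intro x hx
    rw [inf_cons, Submodule.mem_inf, mem_finsetInf] at hx
    rw [inf_cons]
    refine mem_blockSumKernel_inf fun j =>
      ih (fun b hb c hc => hpair b (mem_cons_of_mem hb) c (mem_cons_of_mem hc)) ?_
    refine mem_finsetInf.2 fun b hb => indicator_mem_blockSumKernel ?_ j
    exact hpair a (mem_cons_self a s) b (mem_cons_of_mem hb) ⟨hx.1, hx.2 b hb⟩

theorem sum_smul_single_out_eq_zero [DecidableEq α] {r : Setoid α} {x : α → ℝ}
    (hx : x ∈ blockSumKernel r) :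
    ∑ i, x i • Pi.single (⟦i⟧ : Quotient r).out (1 : ℝ) = 0 := by
  classical
  rw [← sum_fiberwise univ (fun i => (⟦i⟧ : Quotient r))]
  refine sum_eq_zero fun c _ => ?_
  have hfiber : ∑ i with ⟦i⟧ = c, x i • Pi.single (⟦i⟧ : Quotient r).out (1 : ℝ) =
      (∑ i, {i | r i c.out}.indicator x i) • Pi.single c.out 1 := by
    rw [sum_smul, sum_filter]
    refine sum_congr rfl fun i _ => ?_
    by_cases h : r i c.out
    · simp [h, Quotient.mk_eq_iff_out.2 h]
    · simp [h, Quotient.mk_eq_iff_out]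
  rw [hfiber, hx, zero_smul]

end BlockSumKernel

section RootSubspace

variable {n : ℕ}

theorem rootVec_swap (i j : Fin n) : rootVec n j i = -rootVec n i j := by
  simp [rootVec]

theorem rootVec_add_rootVec (i j k : Fin n) : rootVec n i j + rootVec n j k = rootVec n i k := by
  simp [rootVec]

theorem sum_indicator_rootVec_eq_zero {s : Set (Fin n)} {i j : Fin n} (h : i ∈ s ↔ j ∈ s) :
    ∑ l, s.indicator (rootVec n i j) l = 0 := by
  classical
  simp only [rootVec, Set.indicator_sub', Pi.sub_apply, sum_sub_distrib, sub_eq_zero]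
  simp only [Set.indicator_apply, Pi.single_apply, ← ite_and, and_comm (a := _ ∈ s)]
  simp [ite_and, h]

theorem rootVec_mem_blockSumKernel {r : Setoid (Fin n)} {i j : Fin n} (h : r i j) :
    rootVec n i j ∈ blockSumKernel r := fun _ =>
  sum_indicator_rootVec_eq_zero ⟨r.trans (r.symm h), r.trans h⟩

def rootSet (r : Setoid (Fin n)) : Set (Fin n → ℝ) :=
  {v | ∃ i j, i ≠ j ∧ r i j ∧ v = rootVec n i j}

theorem blockSumKernel_eq_span_rootSet (r : Setoid (Fin n)) :
    blockSumKernel r = span ℝ (rootSet r) := by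
  refine le_antisymm (fun x hx => ?_) (span_le.2 ?_)
  · classical
    set rep : Fin n → Fin n := fun i => (⟦i⟧ : Quotient r).out
    -- `∑ i, x i • e_{rep i}` collects the block sums of `x`, so it vanishes.
    have hx_eq : x = ∑ i, x i • rootVec n i (rep i) :=
      calc x = ∑ i, x i • Pi.single i (1 : ℝ) - ∑ i, x i • Pi.single (rep i) (1 : ℝ) := by
            rw [sum_smul_single_out_eq_zero hx, sub_zero]
            simp only [← Pi.single_smul', smul_eq_mul, mul_one, univ_sum_single]
        _ = ∑ i, x i • rootVec n i (rep i) := by simp only [rootVec, smul_sub, sum_sub_distrib]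
    rw [hx_eq]
    refine sum_mem fun i _ => smul_mem _ _ ?_
    by_cases hi : i = rep i
    · rw [← hi, rootVec, sub_self]
      exact zero_mem _
    · exact subset_span ⟨i, rep i, hi, r.symm (Quotient.mk_out i), rfl⟩
  · rintro _ ⟨i, j, -, h, rfl⟩
    exact rootVec_mem_blockSumKernel h

theorem isRootSubspace_blockSumKernel (r : Setoid (Fin n)) :
    IsRootSubspace (blockSumKernel r) :=
  ⟨rootSet r, fun _ ⟨i, j, hij, _, hv⟩ => ⟨i, j, hij, hv⟩, blockSumKernel_eq_span_rootSet r⟩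

theorem blockSumKernel_mono {r r' : Setoid (Fin n)} (h : r ≤ r') :
    blockSumKernel r ≤ blockSumKernel r' := by
  rw [blockSumKernel_eq_span_rootSet, blockSumKernel_eq_span_rootSet]
  exact span_mono fun _ ⟨i, j, hij, hr, hv⟩ => ⟨i, j, hij, h hr, hv⟩

def rootSetoid (V : Submodule ℝ (Fin n → ℝ)) : Setoid (Fin n) where
  r i j := i = j ∨ rootVec n i j ∈ V
  iseqv := by
    refine ⟨fun _ => Or.inl rfl, ?_, ?_⟩
    · rintro i j (rfl | h)
      · exact Or.inl rfl
      · exact Or.inr (by rw [rootVec_swap]; exact V.neg_mem h)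
    · rintro i j k (rfl | hij) (rfl | hjk)
      · exact Or.inl rfl
      · exact Or.inr hjk
      · exact Or.inr hij
      · exact Or.inr (by rw [← rootVec_add_rootVec i j k]; exact V.add_mem hij hjk)

theorem rootSetoid_inf (V W : Submodule ℝ (Fin n → ℝ)) :
    rootSetoid (V ⊓ W) = rootSetoid V ⊓ rootSetoid W :=
  Setoid.ext fun _ _ =>
    or_and_left.trans (Setoid.inf_iff_and (r := rootSetoid V) (s := rootSetoid W)).symm

theorem IsRootSubspace.eq_blockSumKernel {V : Submodule ℝ (Fin n → ℝ)} (hV : IsRootSubspace V) :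
    V = blockSumKernel (rootSetoid V) := by
  obtain ⟨A, hA, rfl⟩ := hV
  refine le_antisymm (span_le.2 fun v hv => ?_) ?_
  · obtain ⟨i, j, -, rfl⟩ := hA v hv
    exact rootVec_mem_blockSumKernel (Or.inr (subset_span hv))
  · rw [blockSumKernel_eq_span_rootSet]
    exact span_le.2 fun _ ⟨i, j, hij, h, hv⟩ => hv ▸ h.resolve_left hij

end RootSubspace

/-- If all pairwise intersections of the root subspaces `L 1, ..., L k` are root
subspaces, then so is the full intersection. -/
theorem stmt3 {n k : ℕ} (hk : 0 < k) (L : Fin k → Submodule ℝ (Fin n → ℝ))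
    (hL : ∀ s, IsRootSubspace (L s))
    (hpair : ∀ s t : Fin k, IsRootSubspace (L s ⊓ L t)) :
    IsRootSubspace (⨅ s, L s) := by
  set r : Fin k → Setoid (Fin n) := fun s => rootSetoid (L s)
  have hLr : ∀ s, L s = blockSumKernel (r s) := fun s => (hL s).eq_blockSumKernel
  have hle : ⨅ s, L s ≤ blockSumKernel (univ.inf r) := by
    rw [← inf_univ_eq_iInf, show L = blockSumKernel ∘ r from funext hLr]
    refine finsetInf_blockSumKernel_le (univ_nonempty_iff.2 ⟨⟨0, hk⟩⟩) fun s _ t _ => ?_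
    rw [← hLr, ← hLr, (hpair s t).eq_blockSumKernel, rootSetoid_inf]
  have hge : blockSumKernel (univ.inf r) ≤ ⨅ s, L s :=
    le_iInf fun s => hLr s ▸ blockSumKernel_mono (inf_le (mem_univ s))
  rw [le_antisymm hle hge]
  exact isRootSubspace_blockSumKernel _
end

section
/- Let A be a finite set of roots {e_i - e_j} in R^n and let σ_A be the cone of all nonnegative real combinations of elements of A. Then e_i - e_j ∈ σ_A if and only if there is a directed path from i to j in the directed graph Γ_A on [n] having an edge i → j for each e_i - e_j ∈ A. -/
/-
A set `S` of vertices closed under the edges of `Γ_A` gives the functional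
`v ↦ ∑ k ∈ S, v k`, which is `≤ 0` on every root of `A` and hence on `σ_A`. For `S` the set
of vertices reachable from `i`, it takes the value `1` on `e_i - e_j` unless `j ∈ S`.
Conversely, `σ_A` contains `A`, is closed under addition, and
`e_a - e_b + (e_b - e_c) = e_a - e_c`.
-/

open Finset Relation

def finsetCone {ι M : Type*} [AddCommMonoid M] [Module ℝ M] (s : Finset ι) (g : ι → M) :
    Set M :=
  {v | ∃ c : ι → ℝ, (∀ p, 0 ≤ c p) ∧ v = ∑ p ∈ s, c p • g p}

section finsetCone

variable {ι M : Type*} [AddCommMonoid M] [Module ℝ M] {s : Finset ι} {g : ι → M}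

lemma mem_finsetCone_of_mem {p : ι} (hp : p ∈ s) : g p ∈ finsetCone s g := by
  classical
  refine ⟨Pi.single p 1, fun q => by simp [Pi.single_apply, apply_ite], ?_⟩
  simp [Pi.single_apply, ite_smul, hp]

lemma add_mem_finsetCone {v w : M} (hv : v ∈ finsetCone s g) (hw : w ∈ finsetCone s g) :
    v + w ∈ finsetCone s g := by
  obtain ⟨c, hc, rfl⟩ := hv
  obtain ⟨d, hd, rfl⟩ := hw
  refine ⟨c + d, fun p => add_nonneg (hc p) (hd p), ?_⟩
  simp only [Pi.add_apply, add_smul, sum_add_distrib]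

end finsetCone

section roots

variable {n : ℕ}

lemma rootVec_add_rootVec_s5 (a b c : Fin n) : rootVec n a b + rootVec n b c = rootVec n a c := by
  simp only [rootVec]; abel

lemma sum_rootVec_apply (S : Finset (Fin n)) (a b : Fin n) :
    ∑ k ∈ S, rootVec n a b k = (if a ∈ S then 1 else 0) - (if b ∈ S then 1 else 0) := by
  simp [rootVec, Pi.single_apply, sum_sub_distrib]

lemma sum_rootVec_apply_nonpos {S : Finset (Fin n)} {a b : Fin n} (h : a ∈ S → b ∈ S) :
    ∑ k ∈ S, rootVec n a b k ≤ 0 := by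
  rw [sum_rootVec_apply]
  by_cases ha : a ∈ S
  · simp [ha, h ha]
  · split_ifs <;> norm_num

variable {A : Finset (Fin n × Fin n)}

lemma sum_apply_nonpos_of_mem_finsetCone {v : Fin n → ℝ}
    (hv : v ∈ finsetCone A fun p => rootVec n p.1 p.2) {S : Finset (Fin n)}
    (hS : ∀ p ∈ A, p.1 ∈ S → p.2 ∈ S) : ∑ k ∈ S, v k ≤ 0 := by
  obtain ⟨c, hc, rfl⟩ := hv
  simp only [Finset.sum_apply, Pi.smul_apply, smul_eq_mul]
  rw [sum_comm]
  exact sum_nonpos fun p hp => by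
    rw [← mul_sum]
    exact mul_nonpos_of_nonneg_of_nonpos (hc p) (sum_rootVec_apply_nonpos (hS p hp))

lemma transGen_of_rootVec_mem_finsetCone {i j : Fin n} (hij : i ≠ j)
    (h : rootVec n i j ∈ finsetCone A fun p => rootVec n p.1 p.2) :
    TransGen (fun a b => (a, b) ∈ A) i j := by
  classical
  set S := univ.filter (ReflTransGen (fun a b => (a, b) ∈ A) i)
  have hS : ∀ p ∈ A, p.1 ∈ S → p.2 ∈ S := fun p hp h1 => by
    simp only [S, mem_filter, mem_univ, true_and] at h1 ⊢
    exact h1.tail hp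
  have hiS : i ∈ S := by simp [S, ReflTransGen.refl]
  have hjS : j ∈ S := by
    by_contra hjS
    have := sum_apply_nonpos_of_mem_finsetCone h hS
    norm_num [sum_rootVec_apply, hiS, hjS] at this
  have hreach : ReflTransGen (fun a b => (a, b) ∈ A) i j := by simpa [S] using hjS
  exact (reflTransGen_iff_eq_or_transGen.mp hreach).resolve_left (Ne.symm hij)

lemma rootVec_mem_finsetCone_of_transGen {i j : Fin n}
    (h : TransGen (fun a b => (a, b) ∈ A) i j) :
    rootVec n i j ∈ finsetCone A fun p => rootVec n p.1 p.2 := by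
  induction h with
  | @single b hab => exact mem_finsetCone_of_mem (p := (i, b)) hab
  | @tail b c _ hbc ih =>
    rw [← rootVec_add_rootVec_s5 i b c]
    exact add_mem_finsetCone ih (mem_finsetCone_of_mem (p := (b, c)) hbc)

end roots

theorem stmt5_general {n : ℕ} (A : Finset (Fin n × Fin n))
    (i j : Fin n) (hij : i ≠ j) :
    (∃ c : Fin n × Fin n → ℝ, (∀ p, 0 ≤ c p) ∧
        rootVec n i j = ∑ p ∈ A, c p • rootVec n p.1 p.2) ↔
      Relation.TransGen (fun a b : Fin n => (a, b) ∈ A) i j :=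
  ⟨transGen_of_rootVec_mem_finsetCone hij, rootVec_mem_finsetCone_of_transGen⟩

/-- For a finite set `A` of roots, `e_i - e_j` lies in the cone of nonnegative
combinations of `A` iff there is a directed path from `i` to `j` in the directed
graph `Γ_A` with an edge `a → b` for each root `e_a - e_b ∈ A`. -/
theorem stmt5 {n : ℕ} (A : Finset (Fin n × Fin n)) (hA : ∀ p ∈ A, p.1 ≠ p.2)
    (i j : Fin n) (hij : i ≠ j) :
    (∃ c : Fin n × Fin n → ℝ, (∀ p, 0 ≤ c p) ∧
        rootVec n i j = ∑ p ∈ A, c p • rootVec n p.1 p.2) ↔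
      Relation.TransGen (fun a b : Fin n => (a, b) ∈ A) i j :=
  stmt5_general A i j hij
end

section
/- Let S = (B_1,...,B_ℓ) of [n] with n ∈ B_ℓ, written as blocks B_j = {b_1^j,...,b_{i_j}^j}. Then the set of points x ∈ R^n satisfying x_n = 0, 1 ≥ x_i for all i ∈ B_1, x_i = x_j for i,j in a common block, x_i ≥ x_j whenever i ∈ B_k, j ∈ B_{k+1}, and x_i = 0 for i ∈ B_ℓ, is exactly the convex hull of the ℓ points 0, e_{B_1}, e_{B_1∪B_2}, ..., e_{B_1∪...∪B_{ℓ-1}}. -/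
/-!
Writing `blk i` for the block containing `i`, the polytope is the image of the order simplex
`{c : ℝ^{ℓ+1} | c antitone, c 0 ≤ 1, c ℓ = 0}` under the linear map `c ↦ c ∘ blk`, and the points
`e_{B 0 ∪ ⋯ ∪ B (t-1)}` are the images of the staircases `𝟙[k < t]`. Linear maps commute with
convex hulls, so it suffices that the order simplex is the convex hull of the staircases: by
telescoping, `c = ∑ₜ (c (t-1) - c t) • 𝟙[k < t]` with `c (-1) = 1`, and the weights are
nonnegative and sum to `1 - c ℓ = 1`.
-/

open Finset Function

theorem Finset.sum_range_ite_lt_sub {M : Type*} [AddCommGroup M] (u : ℕ → M) {k N : ℕ}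
    (hk : k < N) :
    ∑ t ∈ range N, (if k < t then u t - u (t + 1) else 0) = u (k + 1) - u N := by
  rw [← sum_filter, show (range N).filter (k < ·) = Ico (k + 1) N by ext; simp; omega,
    ← neg_sub, ← sum_Ico_sub (f := u) hk, ← sum_neg_distrib]
  simp only [neg_sub]

def orderSimplex (n : ℕ) : Set (Fin (n + 1) → ℝ) :=
  {c | Antitone c ∧ c 0 ≤ 1 ∧ c (Fin.last n) = 0}

def staircase (n : ℕ) (t : Fin (n + 1)) : Fin (n + 1) → ℝ :=
  fun k => if k < t then 1 else 0

section OrderSimplex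

variable {n : ℕ}

theorem staircase_mem_orderSimplex (t : Fin (n + 1)) : staircase n t ∈ orderSimplex n := by
  refine ⟨fun i j hij => ?_, ?_, ?_⟩
  · by_cases hj : j < t
    · simp [staircase, hj, hij.trans_lt hj]
    · simp only [staircase, hj, if_false]
      split_ifs <;> norm_num
  · simp only [staircase]
    split_ifs <;> norm_num
  · simp [staircase, (Fin.le_last t).not_gt]

theorem convex_orderSimplex : Convex ℝ (orderSimplex n) := by
  rintro x ⟨hx, hx0, hxl⟩ y ⟨hy, hy0, hyl⟩ a b ha hb hab
  refine ⟨fun i j hij => ?_, ?_, ?_⟩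
  · simp only [Pi.add_apply, Pi.smul_apply, smul_eq_mul]
    gcongr
    exacts [hx hij, hy hij]
  · simp only [Pi.add_apply, Pi.smul_apply, smul_eq_mul]
    nlinarith
  · simp [hxl, hyl]

theorem orderSimplex_subset_convexHull_staircase :
    orderSimplex n ⊆ convexHull ℝ (Set.range (staircase n)) := by
  rintro c ⟨hanti, hc0, hclast⟩
  set u : ℕ → ℝ := fun j => if j = 0 then 1 else c (Fin.clamp (j - 1) n)
  have hu_succ : ∀ k : Fin (n + 1), u (k + 1) = c k := fun k => by
    simp [u, Fin.clamp, Nat.min_eq_left (Nat.lt_succ_iff.1 k.isLt)]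
  have hu_top : u (n + 1) = 0 := by simpa [hclast] using hu_succ (Fin.last n)
  have hu : Antitone u := by
    refine antitone_nat_of_succ_le fun j => ?_
    rcases j with _ | j
    · simpa [u, Fin.clamp] using hc0
    · simp only [u, Nat.add_one_ne_zero, if_false, Nat.add_sub_cancel]
      exact hanti (by simp [Fin.clamp, Fin.le_def])
  have hsum : ∑ t : Fin (n + 1), (u t - u (t + 1)) = 1 := by
    rw [Fin.sum_univ_eq_sum_range (fun t => u t - u (t + 1)), sum_range_sub', hu_top]
    simp [u]
  have hcomb : ∑ t : Fin (n + 1), (u t - u (t + 1)) • staircase n t = c := by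
    funext k
    simp only [Finset.sum_apply, Pi.smul_apply, staircase, smul_eq_mul, mul_ite, mul_one,
      mul_zero, Fin.lt_def]
    rw [Fin.sum_univ_eq_sum_range (fun t => if k.val < t then u t - u (t + 1) else 0),
      sum_range_ite_lt_sub u k.isLt, hu_succ, hu_top, sub_zero]
  rw [← hcomb]
  exact (convex_convexHull ℝ _).sum_mem (fun t _ => sub_nonneg.2 (hu (Nat.le_succ _))) hsum
    fun t _ => subset_convexHull ℝ _ (Set.mem_range_self t)

theorem orderSimplex_eq_convexHull_staircase :
    orderSimplex n = convexHull ℝ (Set.range (staircase n)) :=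
  orderSimplex_subset_convexHull_staircase.antisymm
    (convexHull_min (Set.range_subset_iff.2 staircase_mem_orderSimplex) convex_orderSimplex)

end OrderSimplex

theorem Finset.exists_mem_iff_eq_of_pairwise_disjoint {ι κ : Type*} {B : κ → Finset ι}
    (hdisj : Pairwise (Disjoint on B)) (hcover : ∀ i, ∃ k, i ∈ B k) :
    ∃ blk : ι → κ, ∀ i k, i ∈ B k ↔ blk i = k := by
  choose blk hblk using hcover
  refine ⟨blk, fun i k => ⟨fun hi => ?_, fun h => h ▸ hblk i⟩⟩
  by_contra h
  exact disjoint_left.1 (hdisj h) (hblk i) hi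

section Blocks

variable {ι : Type*} {ℓ : ℕ} {B : Fin (ℓ + 1) → Finset ι} {blk : ι → Fin (ℓ + 1)}

theorem exists_lt_and_mem_iff (hB : ∀ i k, i ∈ B k ↔ blk i = k) (t : Fin (ℓ + 1)) (i : ι) :
    (∃ s, s < t ∧ i ∈ B s) ↔ blk i < t := by
  simp [hB]

theorem setOf_blockwise_eq_image_orderSimplex (hB : ∀ i k, i ∈ B k ↔ blk i = k)
    (hsurj : Surjective blk) {p : ι} (hp : p ∈ B (Fin.last ℓ)) :
    {x : ι → ℝ | x p = 0 ∧
        (∀ i ∈ B 0, x i ≤ 1) ∧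
        (∀ k : Fin (ℓ + 1), ∀ i ∈ B k, ∀ j ∈ B k, x i = x j) ∧
        (∀ k : Fin ℓ, ∀ i ∈ B k.castSucc, ∀ j ∈ B k.succ, x j ≤ x i) ∧
        (∀ i ∈ B (Fin.last ℓ), x i = 0)} =
      LinearMap.funLeft ℝ ℝ blk '' orderSimplex ℓ := by
  have hrep : ∀ k, surjInv hsurj k ∈ B k := fun k => (hB _ _).2 (surjInv_eq hsurj k)
  ext x
  constructor
  · rintro ⟨-, h0, hconst, hsucc, hlast⟩
    refine ⟨x ∘ surjInv hsurj, ⟨?_, h0 _ (hrep 0), hlast _ (hrep _)⟩, ?_⟩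
    · exact Fin.antitone_iff_succ_le.2 fun k => hsucc k _ (hrep _) _ (hrep _)
    · exact funext fun i => hconst (blk i) _ (hrep _) i ((hB _ _).2 rfl)
  · rintro ⟨c, ⟨hanti, h0, hlast⟩, rfl⟩
    simp only [Set.mem_ofPred_eq, LinearMap.funLeft_apply, hB]
    refine ⟨?_, fun i hi => hi ▸ h0, fun k i hi j hj => by rw [hi, hj],
      fun k i hi j hj => ?_, fun i hi => hi ▸ hlast⟩
    · rw [(hB _ _).1 hp, hlast]
    · rw [hi, hj]
      exact hanti Fin.castSucc_lt_succ.le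

end Blocks

open Classical in
/-- For an ordered set partition `(B 0, ..., B ℓ)` of `[m+1]` with the last element
in the last block, the set of points `x` with `x_n = 0`, `x_i ≤ 1` on the first
block, equal coordinates on each block, decreasing between consecutive blocks and
`x_i = 0` on the last block, is the convex hull of the points
`0, e_{B 0}, e_{B 0 ∪ B 1}, ...`. -/
theorem stmt9 {m ℓ : ℕ}
    (B : Fin (ℓ + 1) → Finset (Fin (m + 1)))
    (hdisj : ∀ k k' : Fin (ℓ + 1), k ≠ k' → Disjoint (B k) (B k'))
    (hne : ∀ k, (B k).Nonempty)
    (hcover : ∀ i : Fin (m + 1), ∃ k, i ∈ B k)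
    (hlast : Fin.last m ∈ B (Fin.last ℓ))
    (W : Fin (ℓ + 1) → (Fin (m + 1) → ℝ))
    (hW : ∀ (t : Fin (ℓ + 1)) (i : Fin (m + 1)),
      W t i = if ∃ s : Fin (ℓ + 1), s < t ∧ i ∈ B s then (1 : ℝ) else 0) :
    {x : Fin (m + 1) → ℝ | x (Fin.last m) = 0 ∧
        (∀ i ∈ B 0, x i ≤ 1) ∧
        (∀ k : Fin (ℓ + 1), ∀ i ∈ B k, ∀ j ∈ B k, x i = x j) ∧
        (∀ k : Fin ℓ, ∀ i ∈ B k.castSucc, ∀ j ∈ B k.succ, x j ≤ x i) ∧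
        (∀ i ∈ B (Fin.last ℓ), x i = 0)} =
      convexHull ℝ (Set.range W) := by
  obtain ⟨blk, hB⟩ := exists_mem_iff_eq_of_pairwise_disjoint hdisj hcover
  have hsurj : Surjective blk := fun k => (hne k).imp fun i => (hB i k).1
  have hW' : W = LinearMap.funLeft ℝ ℝ blk ∘ staircase ℓ := by
    funext t i
    rw [hW]
    exact if_congr (exists_lt_and_mem_iff hB t i) rfl rfl
  rw [setOf_blockwise_eq_image_orderSimplex hB hsurj hlast, orderSimplex_eq_convexHull_staircase,
    LinearMap.image_convexHull, ← Set.range_comp, hW']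
end
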